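/- For the Invincible Fighter (u = 1), for fixed n ≥ 2 and each j = 1, …, n−1, the equation N_n(j+1,t) = N_n(j,t) has a unique solution t(n,j) ∈ (0,∞); moreover N_n(j+1,t) > N_n(j,t) for 0 ≤ t < t(n,j) and N_n(j+1,t) < N_n(j,t) for t > t(n,j). -/

import Mathlib

open Real MeasureTheory Filter Topology

/-- Auxiliary history-based recursion: `Nhist a u n m t` equals `N(m,t)` when `m ≤ n`. -/
noncomputable def Nhist (a : ℕ → ℝ) (u : ℝ) : ℕ → ℕ → ℝ → ℝ
  | 0, _, _ => 0
  | n + 1, m, t =>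
      if m ≤ n then Nhist a u n m t
      else (Finset.Icc 1 (n + 1)).sup'
          (Finset.nonempty_Icc.mpr (Nat.succ_le_succ (Nat.zero_le n)))
          (fun j => a j + (a j * (1 - u) + u) *
            (Real.exp (-t) * ∫ x in (0:ℝ)..t, Nhist a u n (n + 1 - j) x * Real.exp x))

/-- `Nval a u n t` is `N(n,t)`, the optimal expected number of enemy planes shot down,
with `N(0,t) = 0` and `N(n,t) = max_{1 ≤ j ≤ n} N_n(j,t)`. -/
noncomputable def Nval (a : ℕ → ℝ) (u : ℝ) (n : ℕ) (t : ℝ) : ℝ :=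
  Nhist a u n n t

/-- `Nstar a u r t` is `N*(r,t) = e^{-t} ∫_0^t N(r,x) e^x dx` (so `N*(0,t) = 0`). -/
noncomputable def Nstar (a : ℕ → ℝ) (u : ℝ) (r : ℕ) (t : ℝ) : ℝ :=
  Real.exp (-t) * ∫ x in (0:ℝ)..t, Nval a u r x * Real.exp x

/-- `Nalloc a u n j t` is `N_n(j,t) = a(j) + c(j)·N*(n-j,t)` where `c(j) = a(j)(1-u)+u`. -/
noncomputable def Nalloc (a : ℕ → ℝ) (u : ℝ) (n j : ℕ) (t : ℝ) : ℝ :=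
  a j + (a j * (1 - u) + u) * Nstar a u (n - j) t

/-- `Kopt a u n t = min { j ∈ {1,…,n} : N_n(j,t) = N(n,t) }`. -/
noncomputable def Kopt (a : ℕ → ℝ) (u : ℝ) (n : ℕ) (t : ℝ) : ℕ :=
  sInf {j : ℕ | 1 ≤ j ∧ j ≤ n ∧ Nalloc a u n j t = Nval a u n t}

/-! For `u = 1`, `N_n(j,t) - N_n(j+1,t) = D(t) - (a(j+1) - a(j))` where, with `m = n - j - 1`,
`D = N*(m+1,·) - N*(m,·)` is the exponential average (the solution of `D' = f - D`, `D 0 = 0`)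
of `f = N(m+1,·) - N(m,·)`. An exchange argument using the concavity of `a` shows, by induction
on `m` jointly with the same statement for `N*`, that `f` is nondecreasing; moreover
`f ≥ a(m+1) - a(m) > 0`. Hence `D < f` on `(0,∞)`, so `D' > 0` and `D` increases strictly from
`D 0 = 0`. Since `N(m+1,·) ≥ a(1) + N*(m,·)` and `N(r,·)`, `N*(r,·)` are bounded, monotone and
share their limit, `D` tends to a limit `≥ a(1) > a(j+1) - a(j)`. The intermediate value
theorem gives the unique crossing. -/

open Set

/-- The solution of `y' = g - y`, `y 0 = 0`. -/
noncomputable def expAverage (g : ℝ → ℝ) (t : ℝ) : ℝ :=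
  exp (-t) * ∫ x in (0:ℝ)..t, g x * exp x

section expAverage

variable {g h : ℝ → ℝ}

theorem expAverage_zero_right (g : ℝ → ℝ) : expAverage g 0 = 0 := by
  simp [expAverage]

theorem expAverage_sub (hg : Continuous g) (hh : Continuous h) (t : ℝ) :
    expAverage (fun x => g x - h x) t = expAverage g t - expAverage h t := by
  simp only [expAverage, sub_mul]
  rw [← mul_sub, ← intervalIntegral.integral_sub (f := fun x => g x * exp x)
    (g := fun x => h x * exp x) ((hg.mul continuous_exp).intervalIntegrable _ _)
    ((hh.mul continuous_exp).intervalIntegrable _ _)]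

theorem hasDerivAt_expAverage (hg : Continuous g) (t : ℝ) :
    HasDerivAt (expAverage g) (g t - expAverage g t) t := by
  have hint : HasDerivAt (fun s => ∫ x in (0:ℝ)..s, g x * exp x) (g t * exp t) t :=
    intervalIntegral.integral_hasDerivAt_right ((hg.mul continuous_exp).intervalIntegrable _ _)
      ((hg.mul continuous_exp).stronglyMeasurableAtFilter _ _)
      (hg.mul continuous_exp).continuousAt
  refine HasDerivAt.congr_deriv (f := expAverage g) ((hasDerivAt_neg t).exp.mul hint) ?_
  rw [expAverage, mul_left_comm, mul_assoc, ← exp_add, neg_add_cancel, exp_zero]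
  ring

theorem continuous_expAverage (hg : Continuous g) : Continuous (expAverage g) :=
  continuous_iff_continuousAt.2 fun t => (hasDerivAt_expAverage hg t).continuousAt

theorem expAverage_nonneg {t : ℝ} (ht : 0 ≤ t) (hg : ∀ x ∈ Icc 0 t, 0 ≤ g x) :
    0 ≤ expAverage g t :=
  mul_nonneg (exp_pos _).le <|
    intervalIntegral.integral_nonneg ht fun x hx => mul_nonneg (hg x hx) (exp_pos x).le

theorem expAverage_le (hg : Continuous g) {t C : ℝ} (ht : 0 ≤ t)
    (hC : ∀ x ∈ Icc 0 t, g x ≤ C) : expAverage g t ≤ C * (1 - exp (-t)) := by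
  have hint : ∫ x in (0:ℝ)..t, g x * exp x ≤ ∫ x in (0:ℝ)..t, C * exp x :=
    intervalIntegral.integral_mono_on ht ((hg.mul continuous_exp).intervalIntegrable _ _)
      ((continuous_const.mul continuous_exp).intervalIntegrable _ _)
      fun x hx => mul_le_mul_of_nonneg_right (hC x hx) (exp_pos x).le
  rw [intervalIntegral.integral_const_mul, integral_exp, exp_zero] at hint
  calc expAverage g t ≤ exp (-t) * (C * (exp t - 1)) :=
        mul_le_mul_of_nonneg_left hint (exp_pos _).le
    _ = C * (1 - exp (-t)) := by rw [exp_neg]; field_simp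

theorem le_expAverage (hg : Continuous g) {s t c : ℝ} (hs : 0 ≤ s) (hst : s ≤ t)
    (h0 : ∀ x ∈ Icc 0 s, 0 ≤ g x) (hc : ∀ x ∈ Icc s t, c ≤ g x) :
    c * (1 - exp (s - t)) ≤ expAverage g t := by
  have hgi (a b : ℝ) : IntervalIntegrable (fun x => g x * exp x) volume a b :=
    (hg.mul continuous_exp).intervalIntegrable a b
  have hhead : 0 ≤ ∫ x in (0:ℝ)..s, g x * exp x :=
    intervalIntegral.integral_nonneg hs fun x hx => mul_nonneg (h0 x hx) (exp_pos x).le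
  have htail : ∫ x in s..t, c * exp x ≤ ∫ x in s..t, g x * exp x :=
    intervalIntegral.integral_mono_on (μ := volume) hst
      ((continuous_const.mul continuous_exp).intervalIntegrable _ _) (hgi _ _)
      fun x hx => mul_le_mul_of_nonneg_right (hc x hx) (exp_pos x).le
  rw [intervalIntegral.integral_const_mul, integral_exp] at htail
  calc c * (1 - exp (s - t)) = exp (-t) * (c * (exp t - exp s)) := by
        rw [sub_eq_add_neg s, exp_add, exp_neg]; field_simp
    _ ≤ expAverage g t := by
        rw [expAverage, ← intervalIntegral.integral_add_adjacent_intervals (hgi 0 s) (hgi s t)]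
        exact mul_le_mul_of_nonneg_left (by linarith) (exp_pos _).le

theorem MonotoneOn.expAverage_le (hg : Continuous g) (hmono : MonotoneOn g (Ici 0)) {t : ℝ}
    (ht : 0 ≤ t) : expAverage g t ≤ g t * (1 - exp (-t)) :=
  _root_.expAverage_le hg ht fun _ hx => hmono hx.1 ht hx.2

theorem MonotoneOn.expAverage_strictMonoOn (hg : Continuous g) (hmono : MonotoneOn g (Ici 0))
    (hpos : ∀ x ∈ Ici 0, 0 < g x) : StrictMonoOn (expAverage g) (Ici 0) := by
  refine strictMonoOn_of_hasDerivWithinAt_pos (convex_Ici 0)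
    (continuous_expAverage hg).continuousOn
    (fun x _ => (hasDerivAt_expAverage hg x).hasDerivWithinAt) fun x hx => ?_
  rw [interior_Ici, mem_Ioi] at hx
  nlinarith [hmono.expAverage_le hg hx.le, hpos x hx.le, exp_pos (-x)]

theorem MonotoneOn.expAverage_monotoneOn (hg : Continuous g) (hmono : MonotoneOn g (Ici 0))
    (hnn : ∀ x ∈ Ici 0, 0 ≤ g x) : MonotoneOn (expAverage g) (Ici 0) := by
  refine monotoneOn_of_hasDerivWithinAt_nonneg (convex_Ici 0)
    (continuous_expAverage hg).continuousOn
    (fun x _ => (hasDerivAt_expAverage hg x).hasDerivWithinAt) fun x hx => ?_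
  rw [interior_Ici, mem_Ioi] at hx
  nlinarith [hmono.expAverage_le hg hx.le, hnn x hx.le, exp_pos (-x)]

/-- Squeeze `expAverage g t` between `g (t/2) (1 - e^{-t/2})` and `g t (1 - e^{-t})`. -/
theorem MonotoneOn.tendsto_expAverage (hg : Continuous g) (hmono : MonotoneOn g (Ici 0))
    (hnn : ∀ x ∈ Ici 0, 0 ≤ g x) {L : ℝ} (hL : Tendsto g atTop (𝓝 L)) :
    Tendsto (expAverage g) atTop (𝓝 L) := by
  have hexp : Tendsto (fun t => 1 - exp (-t)) atTop (𝓝 1) := by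
    simpa using tendsto_exp_neg_atTop_nhds_zero.const_sub 1
  have hhalf : Tendsto (fun t : ℝ => t / 2) atTop atTop := tendsto_id.atTop_div_const two_pos
  have lower : Tendsto (fun t => g (t / 2) * (1 - exp (-(t / 2)))) atTop (𝓝 L) := by
    simpa using (hL.comp hhalf).mul (hexp.comp hhalf)
  have upper : Tendsto (fun t => g t * (1 - exp (-t))) atTop (𝓝 L) := by
    simpa using hL.mul hexp
  refine tendsto_of_tendsto_of_tendsto_of_le_of_le' lower upper ?_ ?_ <;>
    filter_upwards [eventually_ge_atTop 0] with t ht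
  · have ht2 : 0 ≤ t / 2 := by positivity
    have h := le_expAverage hg ht2 (half_le_self ht) (fun x hx => hnn x hx.1)
      fun x hx => hmono ht2 (ht2.trans hx.1) hx.1
    rwa [show t / 2 - t = -(t / 2) by ring] at h
  · exact hmono.expAverage_le hg ht

end expAverage

theorem MonotoneOn.exists_tendsto_atTop {f : ℝ → ℝ} {M : ℝ} (hf : MonotoneOn f (Ici 0))
    (hM : ∀ x ∈ Ici 0, f x ≤ M) : ∃ L, Tendsto f atTop (𝓝 L) := by
  have hmono : Monotone fun x => f (max x 0) := fun x y hxy =>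
    hf (le_max_right x 0) (le_max_right y 0) (max_le_max_right 0 hxy)
  refine ⟨_, (tendsto_atTop_ciSup hmono ⟨M, ?_⟩).congr' ?_⟩
  · rintro _ ⟨x, rfl⟩
    exact hM _ (le_max_right x 0)
  · filter_upwards [eventually_ge_atTop 0] with x hx
    rw [max_eq_left hx]

theorem StrictMonoOn.exists_unique_eq_of_lt {D : ℝ → ℝ} {c T : ℝ}
    (hmono : StrictMonoOn D (Ici 0)) (hD : ContinuousOn D (Ici 0)) (h0 : D 0 < c) (hT0 : 0 ≤ T)
    (hT : c < D T) :
    ∃ tc, 0 < tc ∧ D tc = c ∧ (∀ t, 0 ≤ t → D t = c → t = tc) ∧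
      (∀ t, 0 ≤ t → t < tc → D t < c) ∧ ∀ t, tc < t → c < D t := by
  obtain ⟨tc, htc, hDtc⟩ := intermediate_value_Icc hT0 (hD.mono Icc_subset_Ici_self)
    ⟨h0.le, hT.le⟩
  have htc0 : 0 < tc := htc.1.lt_of_ne (by rintro rfl; exact h0.ne hDtc)
  refine ⟨tc, htc0, hDtc, fun t ht hDt => hmono.injOn ht htc0.le (hDt.trans hDtc.symm),
    fun t ht hlt => hDtc ▸ hmono ht htc0.le hlt, fun t hlt => ?_⟩
  exact hDtc ▸ hmono htc0.le (htc0.le.trans hlt.le) hlt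

section Recursion

variable (a : ℕ → ℝ) (u : ℝ)

theorem Nhist_eq_Nval : ∀ {n m : ℕ}, m ≤ n → ∀ t, Nhist a u n m t = Nval a u m t
  | 0, m, hm, t => by rw [Nat.le_zero.1 hm]; rfl
  | n + 1, m, hm, t => by
    rcases hm.lt_or_eq with hlt | rfl
    · rw [Nhist, if_pos (Nat.lt_succ_iff.1 hlt), Nhist_eq_Nval (Nat.lt_succ_iff.1 hlt)]
    · rfl

theorem Nval_zero (t : ℝ) : Nval a u 0 t = 0 := rfl

theorem Nstar_eq_expAverage (r : ℕ) : Nstar a u r = expAverage (Nval a u r) := rfl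

theorem Nstar_zero (t : ℝ) : Nstar a u 0 t = 0 := by
  simp [Nstar, Nval_zero]

theorem Nval_succ (n : ℕ) (t : ℝ) :
    Nval a u (n + 1) t = (Finset.Icc 1 (n + 1)).sup' (Finset.nonempty_Icc.2 (by omega))
      fun j => Nalloc a u (n + 1) j t := by
  rw [Nval, Nhist, if_neg (by omega)]
  refine Finset.sup'_congr _ rfl fun j hj => ?_
  rw [Finset.mem_Icc] at hj
  simp only [Nalloc, Nstar, Nhist_eq_Nval a u (show n + 1 - j ≤ n by omega)]

theorem Nalloc_le_Nval {n j : ℕ} (hj : 1 ≤ j) (hjn : j ≤ n) (t : ℝ) :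
    Nalloc a u n j t ≤ Nval a u n t := by
  obtain ⟨n, rfl⟩ : ∃ k, n = k + 1 := ⟨n - 1, by omega⟩
  rw [Nval_succ]
  exact Finset.le_sup' (fun j => Nalloc a u (n + 1) j t) (Finset.mem_Icc.2 ⟨hj, hjn⟩)

theorem exists_Nalloc_eq_Nval {n : ℕ} (hn : 1 ≤ n) (t : ℝ) :
    ∃ j, 1 ≤ j ∧ j ≤ n ∧ Nval a u n t = Nalloc a u n j t := by
  obtain ⟨n, rfl⟩ : ∃ k, n = k + 1 := ⟨n - 1, by omega⟩
  obtain ⟨j, hj, he⟩ := Finset.exists_mem_eq_sup' (Finset.nonempty_Icc.2 hn)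
    fun j => Nalloc a u (n + 1) j t
  rw [Finset.mem_Icc] at hj
  exact ⟨j, hj.1, hj.2, by rw [Nval_succ, he]⟩

theorem continuous_Nval (r : ℕ) : Continuous (Nval a u r) := by
  induction r using Nat.strong_induction_on with
  | _ r ih =>
    cases r with
    | zero => exact continuous_const
    | succ n =>
      simp only [funext (Nval_succ a u n)]
      refine Continuous.finset_sup'_apply _ fun j hj => ?_
      rw [Finset.mem_Icc] at hj
      exact continuous_const.add <| continuous_const.mul <|
        continuous_expAverage (ih _ (by omega))

theorem continuous_Nstar (r : ℕ) : Continuous (Nstar a u r) :=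
  continuous_expAverage (continuous_Nval a u r)

theorem Nval_one (t : ℝ) : Nval a u 1 t = a 1 := by
  simp [Nval_succ a u 0, Nalloc, Nstar_zero]

theorem Nstar_succ_sub_eq_expAverage (r : ℕ) :
    (fun t => Nstar a u (r + 1) t - Nstar a u r t) =
      expAverage fun t => Nval a u (r + 1) t - Nval a u r t :=
  funext fun t => (expAverage_sub (continuous_Nval a u _) (continuous_Nval a u _) t).symm

end Recursion

theorem Nalloc_one (a : ℕ → ℝ) (n j : ℕ) (t : ℝ) :
    Nalloc a 1 n j t = a j + Nstar a 1 (n - j) t := by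
  simp [Nalloc]

section InvincibleFighter

variable {a : ℕ → ℝ}

theorem Nval_nonneg (ha : ∀ j, 0 ≤ a j) :
    ∀ (r : ℕ) {t : ℝ}, 0 ≤ t → 0 ≤ Nval a 1 r t
  | 0, _, _ => le_rfl
  | r + 1, t, ht => by
    have h := Nalloc_le_Nval a 1 le_rfl (by omega : 1 ≤ r + 1) t
    rw [Nalloc_one, Nat.add_sub_cancel] at h
    have hstar : 0 ≤ Nstar a 1 r t := expAverage_nonneg ht fun x hx => Nval_nonneg ha r hx.1
    linarith [ha 1]

theorem Nval_le (ha : ∀ j, a j ≤ 1) (r : ℕ) {t : ℝ} (ht : 0 ≤ t) :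
    Nval a 1 r t ≤ r := by
  induction r using Nat.strong_induction_on generalizing t with
  | _ r ih =>
    cases r with
    | zero => simp [Nval_zero]
    | succ n =>
      rw [Nval_succ]
      refine Finset.sup'_le _ _ fun j hj => ?_
      rw [Finset.mem_Icc] at hj
      have hk : ((n + 1 - j : ℕ) : ℝ) ≤ n := by exact_mod_cast (by omega : n + 1 - j ≤ n)
      have hstar : Nstar a 1 (n + 1 - j) t ≤ (n + 1 - j : ℕ) * (1 - exp (-t)) :=
        expAverage_le (continuous_Nval a 1 _) ht fun x hx => ih _ (by omega) hx.1
      rw [Nalloc_one]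
      push_cast
      nlinarith [ha j, exp_pos (-t), Nat.cast_nonneg (α := ℝ) (n + 1 - j)]

theorem monotoneOn_Nval (ha : ∀ j, 0 ≤ a j) (r : ℕ) : MonotoneOn (Nval a 1 r) (Ici 0) := by
  induction r using Nat.strong_induction_on with
  | _ r ih =>
    cases r with
    | zero => exact fun _ _ _ _ _ => le_rfl
    | succ n =>
      intro s hs t ht hst
      rw [Nval_succ, Nval_succ]
      refine Finset.sup'_mono_fun fun j hj => ?_
      rw [Finset.mem_Icc] at hj
      have hk : n + 1 - j < n + 1 := by omega
      have hstar := (ih _ hk).expAverage_monotoneOn (continuous_Nval a 1 _)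
        (fun x hx => Nval_nonneg ha _ hx) hs ht hst
      rw [Nalloc_one, Nalloc_one]
      exact add_le_add_right hstar _

theorem sub_le_Nval_succ_sub (ha0 : a 0 = 0) (hconc : Antitone fun j => a (j + 1) - a j)
    (r : ℕ) (t : ℝ) : a (r + 1) - a r ≤ Nval a 1 (r + 1) t - Nval a 1 r t := by
  rcases r with _ | m
  · simp [Nval_one, Nval_zero, ha0]
  obtain ⟨j, hj1, hjm, hj⟩ := exists_Nalloc_eq_Nval a 1 (by omega : 1 ≤ m + 1) t
  have h := Nalloc_le_Nval a 1 (by omega : 1 ≤ j + 1) (by omega : j + 1 ≤ m + 2) t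
  rw [Nalloc_one, show m + 2 - (j + 1) = m + 1 - j by omega] at h
  rw [Nalloc_one] at hj
  linarith [hconc (show j ≤ m + 1 from hjm)]

theorem monotoneOn_Nval_succ_sub (hconc : Antitone fun j => a (j + 1) - a j) {r : ℕ}
    (hstar : ∀ k < r, MonotoneOn (fun t => Nstar a 1 (k + 1) t - Nstar a 1 k t) (Ici 0)) :
    MonotoneOn (fun t => Nval a 1 (r + 1) t - Nval a 1 r t) (Ici 0) := by
  intro s hs t ht hst
  dsimp only
  have chain {k k' : ℕ} (hkk' : k ≤ k') (hk' : k' ≤ r) :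
      Nstar a 1 k t - Nstar a 1 k s ≤ Nstar a 1 k' t - Nstar a 1 k' s := by
    induction k', hkk' using Nat.le_induction with
    | base => exact le_rfl
    | succ k' hkk' ih =>
      have := hstar k' (by omega) hs ht hst
      dsimp only at this
      linarith [ih (by omega)]
  rcases r with _ | m
  · simp [Nval_one, Nval_zero]
  obtain ⟨j1, hj1, hj1m, hj1e⟩ := exists_Nalloc_eq_Nval a 1 (by omega : 1 ≤ m + 1) t
  obtain ⟨j2, hj2, hj2m, hj2e⟩ := exists_Nalloc_eq_Nval a 1 (by omega : 1 ≤ m + 2) s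
  rw [Nalloc_one] at hj1e hj2e
  rcases le_or_gt j2 (j1 + 1) with hj | hj
  · have hA := Nalloc_le_Nval a 1 hj2 hj2m t
    have hB := Nalloc_le_Nval a 1 hj1 hj1m s
    rw [Nalloc_one] at hA hB
    linarith [chain (show m + 1 - j1 ≤ m + 2 - j2 by omega) (by omega)]
  · -- exchange one unit between the two allocations; concavity of `a` pays for it
    have hA := Nalloc_le_Nval a 1 (by omega : 1 ≤ j1 + 1) (by omega : j1 + 1 ≤ m + 2) t
    have hB := Nalloc_le_Nval a 1 (by omega : 1 ≤ j2 - 1) (by omega : j2 - 1 ≤ m + 1) s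
    rw [Nalloc_one, show m + 2 - (j1 + 1) = m + 1 - j1 by omega] at hA
    rw [Nalloc_one, show m + 1 - (j2 - 1) = m + 2 - j2 by omega] at hB
    have hc : a (j2 - 1 + 1) - a (j2 - 1) ≤ a (j1 + 1) - a j1 :=
      hconc (by omega : j1 ≤ j2 - 1)
    rw [show j2 - 1 + 1 = j2 by omega] at hc
    linarith

theorem monotoneOn_Nstar_succ_sub (ha0 : a 0 = 0) (hmono : Monotone a)
    (hconc : Antitone fun j => a (j + 1) - a j) (r : ℕ) :
    MonotoneOn (fun t => Nstar a 1 (r + 1) t - Nstar a 1 r t) (Ici 0) := by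
  induction r using Nat.strong_induction_on with
  | _ r ih =>
    rw [Nstar_succ_sub_eq_expAverage]
    exact (monotoneOn_Nval_succ_sub hconc ih).expAverage_monotoneOn
      ((continuous_Nval a 1 _).sub (continuous_Nval a 1 _)) fun t _ =>
        (sub_nonneg.2 (hmono (Nat.le_succ r))).trans (sub_le_Nval_succ_sub ha0 hconc r t)

theorem strictMonoOn_Nstar_succ_sub (ha0 : a 0 = 0) (hmono : StrictMono a)
    (hconc : Antitone fun j => a (j + 1) - a j) (r : ℕ) :
    StrictMonoOn (fun t => Nstar a 1 (r + 1) t - Nstar a 1 r t) (Ici 0) := by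
  rw [Nstar_succ_sub_eq_expAverage]
  exact (monotoneOn_Nval_succ_sub hconc fun k _ =>
    monotoneOn_Nstar_succ_sub ha0 hmono.monotone hconc k).expAverage_strictMonoOn
      ((continuous_Nval a 1 _).sub (continuous_Nval a 1 _)) fun t _ =>
        (sub_pos.2 (hmono (Nat.lt_succ_self r))).trans_le (sub_le_Nval_succ_sub ha0 hconc r t)

theorem exists_tendsto_Nval_Nstar (haI : ∀ j, a j ∈ Icc (0:ℝ) 1) (r : ℕ) :
    ∃ L, Tendsto (Nval a 1 r) atTop (𝓝 L) ∧ Tendsto (Nstar a 1 r) atTop (𝓝 L) := by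
  have hnn : ∀ j, 0 ≤ a j := fun j => (haI j).1
  obtain ⟨L, hL⟩ := (monotoneOn_Nval hnn r).exists_tendsto_atTop
    fun t ht => Nval_le (fun j => (haI j).2) r ht
  exact ⟨L, hL, (monotoneOn_Nval hnn r).tendsto_expAverage (continuous_Nval a 1 r)
    (fun t ht => Nval_nonneg hnn r ht) hL⟩

/-- `N(r+1) ≥ a 1 + N*(r)`, while `N(r)` and `N*(r)` have a common limit at infinity. -/
theorem exists_lt_Nstar_succ_sub (haI : ∀ j, a j ∈ Icc (0:ℝ) 1) (r : ℕ) {c : ℝ}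
    (hc : c < a 1) :
    ∃ T, 0 ≤ T ∧ c < Nstar a 1 (r + 1) T - Nstar a 1 r T := by
  obtain ⟨L, hNL, hSL⟩ := exists_tendsto_Nval_Nstar haI r
  obtain ⟨L', hNL', hSL'⟩ := exists_tendsto_Nval_Nstar haI (r + 1)
  have hL : a 1 + L ≤ L' := by
    refine le_of_tendsto_of_tendsto' (hSL.const_add (a 1)) hNL' fun t => ?_
    have h := Nalloc_le_Nval a 1 le_rfl (by omega : 1 ≤ r + 1) t
    rwa [Nalloc_one, Nat.add_sub_cancel] at h
  have hev := (hSL'.sub hSL).eventually (lt_mem_nhds (by linarith : c < L' - L))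
  obtain ⟨T, hT, hT0⟩ := (hev.and (eventually_ge_atTop 0)).exists
  exact ⟨T, hT0, hT⟩

end InvincibleFighter

theorem invincible_crossing_general
    (a : ℕ → ℝ) (haI : ∀ j, a j ∈ Set.Icc (0:ℝ) 1) (ha0 : a 0 = 0)
    (hmono : StrictMono a)
    (hconc : ∀ j : ℕ, a (j + 2) - a (j + 1) < a (j + 1) - a j)
    (n : ℕ) :
    ∀ j : ℕ, 1 ≤ j → j + 1 ≤ n →
      ∃ tc : ℝ, 0 < tc ∧
        Nalloc a 1 n (j + 1) tc = Nalloc a 1 n j tc ∧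
        (∀ t : ℝ, 0 ≤ t → Nalloc a 1 n (j + 1) t = Nalloc a 1 n j t → t = tc) ∧
        (∀ t : ℝ, 0 ≤ t → t < tc → Nalloc a 1 n j t < Nalloc a 1 n (j + 1) t) ∧
        (∀ t : ℝ, tc < t → Nalloc a 1 n (j + 1) t < Nalloc a 1 n j t) := by
  intro j hj hjn
  obtain ⟨m, rfl⟩ : ∃ m, n = j + 1 + m := ⟨n - (j + 1), by omega⟩
  have hanti : StrictAnti fun i => a (i + 1) - a i := strictAnti_nat_of_succ_lt hconc
  have hgap : a (j + 1) - a j < a 1 := by simpa [ha0] using hanti (by omega : 0 < j)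
  have hdiff (t : ℝ) : Nalloc a 1 (j + 1 + m) j t - Nalloc a 1 (j + 1 + m) (j + 1) t =
      (Nstar a 1 (m + 1) t - Nstar a 1 m t) - (a (j + 1) - a j) := by
    rw [Nalloc_one, Nalloc_one, show j + 1 + m - j = m + 1 by omega,
      show j + 1 + m - (j + 1) = m by omega]
    ring
  obtain ⟨T, hT0, hT⟩ := exists_lt_Nstar_succ_sub haI m hgap
  obtain ⟨tc, htc, heq, huniq, hbefore, hafter⟩ :=
    (strictMonoOn_Nstar_succ_sub ha0 hmono hanti.antitone m).exists_unique_eq_of_lt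
      ((continuous_Nstar a 1 _).sub (continuous_Nstar a 1 _)).continuousOn
      (by simpa [Nstar_eq_expAverage, expAverage_zero_right] using hmono (lt_add_one j))
      hT0 hT
  refine ⟨tc, htc, by linarith [hdiff tc], fun t ht h => huniq t ht (by linarith [hdiff t]),
    fun t ht hlt => by linarith [hdiff t, hbefore t ht hlt],
    fun t hlt => by linarith [hdiff t, hafter t hlt]⟩

/-- Lemma 4.7: for the Invincible Fighter (`u = 1`), fixed `n ≥ 2` and `j = 1,…,n-1`,
the equation `N_n(j+1,t) = N_n(j,t)` has a unique solution `t(n,j) ∈ (0,∞)`;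
moreover `N_n(j+1,t) > N_n(j,t)` for `0 ≤ t < t(n,j)` and `N_n(j+1,t) < N_n(j,t)`
for `t > t(n,j)`. -/
theorem invincible_crossing
    (a : ℕ → ℝ) (haI : ∀ j, a j ∈ Set.Icc (0:ℝ) 1) (ha0 : a 0 = 0)
    (hmono : StrictMono a)
    (hconc : ∀ j : ℕ, a (j + 2) - a (j + 1) < a (j + 1) - a j)
    (n : ℕ) (hn : 2 ≤ n) :
    ∀ j : ℕ, 1 ≤ j → j + 1 ≤ n →
      ∃ tc : ℝ, 0 < tc ∧
        Nalloc a 1 n (j + 1) tc = Nalloc a 1 n j tc ∧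
        (∀ t : ℝ, 0 ≤ t → Nalloc a 1 n (j + 1) t = Nalloc a 1 n j t → t = tc) ∧
        (∀ t : ℝ, 0 ≤ t → t < tc → Nalloc a 1 n j t < Nalloc a 1 n (j + 1) t) ∧
        (∀ t : ℝ, tc < t → Nalloc a 1 n (j + 1) t < Nalloc a 1 n j t) :=
  invincible_crossing_general a haI ha0 hmono hconc n
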